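/- arXiv:1403.4904 — 2 statements merged into one kernel-verified Lean document; each statement's English description precedes it below -/
import Mathlib

section
/- For an impulsive dynamical system (X, φ̄, D, I) with impulsive semiflow φ, satisfying I(Ω_φ ∩ D) ⊂ Ω_φ \ D, the quotient π(Ω_φ) of the non-wandering set by the equivalence relation generated by the impulsive map is a compact metric space (its quotient pseudometric is a metric). -/
open Set Filter Topology MeasureTheory Function
open scoped NNReal ENNReal

/-- A semiflow on `X`: `φ 0 = id` and `φ (t+s) = φ t ∘ φ s`. -/
def IsSemiflow {X : Type*} (φ : ℝ≥0 → X → X) : Prop :=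
  (∀ x, φ 0 x = x) ∧ ∀ (s t : ℝ≥0) (x : X), φ (t + s) x = φ t (φ s x)

/-- `x` is non-wandering for `φ`: every neighborhood `U` of `x` and every `T > 0`
admit `t ≥ T` with `φ t ⁻¹' U ∩ U ≠ ∅`. -/
def NonWandering {X : Type*} [TopologicalSpace X] (φ : ℝ≥0 → X → X) (x : X) : Prop :=
  ∀ U ∈ nhds x, ∀ T : ℝ≥0, 0 < T → ∃ t : ℝ≥0, T ≤ t ∧ (φ t ⁻¹' U ∩ U).Nonempty

/-- The non-wandering set of `φ`. -/
def NonWanderingSet {X : Type*} [TopologicalSpace X] (φ : ℝ≥0 → X → X) : Set X :=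
  {x | NonWandering φ x}

/-- The first impulsive time `τ₁(x)`: the infimum of positive times at which the base
semiflow trajectory of `x` hits `D` (equal to `∞` if it never does). -/
noncomputable def ImpulsiveTau {X : Type*} (φb : ℝ≥0 → X → X) (D : Set X) (x : X) : ℝ≥0∞ :=
  sInf ((fun t : ℝ≥0 => (t : ℝ≥0∞)) '' {t : ℝ≥0 | 0 < t ∧ φb t x ∈ D})

/-- `φ` is the impulsive semiflow of the impulsive dynamical system `(X, φb, D, I)`:
it is a semiflow which follows `φb` strictly before the first impulsive time, and jumps
via `I` at the first impulsive time.  (Together with the semigroup property this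
determines the whole impulsive trajectory.) -/
def IsImpulsiveSemiflow {X : Type*} (φb : ℝ≥0 → X → X) (D : Set X)
    (I : X → X) (φ : ℝ≥0 → X → X) : Prop :=
  IsSemiflow φ ∧
  (∀ x, ∀ t : ℝ≥0, (t : ℝ≥0∞) < ImpulsiveTau φb D x → φ t x = φb t x) ∧
  (∀ x, ∀ t : ℝ≥0, (t : ℝ≥0∞) = ImpulsiveTau φb D x → φ t x = I (φb t x))

/-- The relation determined by the impulsive map: `x ∼ y` iff `x = y`, `y = I x`,
`x = I y`, or `I x = I y` (with `I` only acting on points of `D`). -/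
def ImpulseRel {X : Type*} (D : Set X) (I : X → X) (x y : X) : Prop :=
  x = y ∨ (x ∈ D ∧ y = I x) ∨ (y ∈ D ∧ x = I y) ∨ (x ∈ D ∧ y ∈ D ∧ I x = I y)

/-! The restriction `Ω → π(Ω)` of the quotient map is itself a quotient map: an open set of `X`
whose trace on `Ω` is saturated can be enlarged, without changing that trace, to an open set that
is invariant under `I` (take the largest open set that `I` maps into itself on `D` and whose trace
lies in the given one). On `Ω` the generated equivalence is `ImpulseRel` itself, a closed relation,
so `π(Ω)` is the image of the compact metric space `Ω` under a proper map with closed kernel; such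
an image is Hausdorff and second countable, hence metrizable. -/

lemma isClosed_nonWanderingSet {X : Type*} [TopologicalSpace X] (φ : ℝ≥0 → X → X) :
    IsClosed (NonWanderingSet φ) := by
  refine isClosed_of_closure_subset fun x hx U hU T hT => ?_
  obtain ⟨V, hVU, hVo, hxV⟩ := mem_nhds_iff.mp hU
  obtain ⟨y, hyV, hy⟩ := mem_closure_iff.mp hx V hVo hxV
  obtain ⟨t, hTt, z, hz⟩ := hy V (hVo.mem_nhds hyV) T hT
  exact ⟨t, hTt, z, hVU hz.1, hVU hz.2⟩

section ProperMap

variable {K Y : Type*} [TopologicalSpace K] [TopologicalSpace Y] {f : K → Y}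

theorem Topology.IsQuotientMap.isProperMap_of_isClosed_ker [CompactSpace K]
    (hf : IsQuotientMap f) (hker : IsClosed {p : K × K | f p.1 = f p.2}) : IsProperMap f := by
  refine isProperMap_iff_isClosedMap_and_compact_fibers.mpr
    ⟨hf.continuous, fun C hC => ?_, fun y => ?_⟩
  · have hsat : f ⁻¹' (f '' C) = Prod.fst '' ({p | f p.1 = f p.2} ∩ Prod.snd ⁻¹' C) := by
      ext x
      constructor
      · rintro ⟨c, hc, hcx⟩
        exact ⟨(x, c), ⟨hcx.symm, hc⟩, rfl⟩
      · rintro ⟨⟨x', c⟩, ⟨hxc, hc⟩, rfl⟩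
        exact ⟨c, hc, hxc.symm⟩
    rw [← hf.isClosed_preimage, hsat]
    exact isClosedMap_fst_of_compactSpace _ (hker.inter (hC.preimage continuous_snd))
  · obtain ⟨x, rfl⟩ := hf.surjective y
    exact (hker.preimage (continuous_id.prodMk continuous_const : Continuous fun z => (z, x)))
      |>.isCompact

theorem IsProperMap.t2Space_of_isClosed_ker (hf : IsProperMap f) (hsurj : Surjective f)
    (hker : IsClosed {p : K × K | f p.1 = f p.2}) : T2Space Y := by
  have hdiag : diagonal Y = Prod.map f f '' {p | f p.1 = f p.2} := by
    ext ⟨y, y'⟩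
    constructor
    · rintro (rfl : y = y')
      obtain ⟨x, rfl⟩ := hsurj y
      exact ⟨(x, x), rfl, rfl⟩
    · rintro ⟨⟨x, x'⟩, hxx' : f x = f x', hxy⟩
      simp only [Prod.map, Prod.mk.injEq] at hxy
      exact hxy.1.symm.trans (hxx'.trans hxy.2)
  rw [t2_iff_isClosed_diagonal, hdiag]
  exact (hf.prodMap hf).isClosedMap _ hker

open TopologicalSpace in
theorem IsProperMap.secondCountableTopology [SecondCountableTopology K] (hf : IsProperMap f)
    (hsurj : Surjective f) : SecondCountableTopology Y := by
  set B := countableBasis K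
  have hopen : ∀ 𝒮 ⊆ B, IsOpen (f '' (⋃₀ 𝒮)ᶜ)ᶜ := fun 𝒮 h𝒮 =>
    (hf.isClosedMap _ (isOpen_sUnion fun s hs =>
      isOpen_of_mem_countableBasis (h𝒮 hs)).isClosed_compl).isOpen_compl
  refine IsTopologicalBasis.secondCountableTopology
    (b := (fun 𝒮 => (f '' (⋃₀ 𝒮)ᶜ)ᶜ) '' {𝒮 | 𝒮.Finite ∧ 𝒮 ⊆ B})
    (isTopologicalBasis_of_isOpen_of_nhds ?_ fun y O hyO hO => ?_)
    ((countable_ofPred_finite_subset (countable_countableBasis K)).image _)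
  · rintro _ ⟨𝒮, ⟨-, h𝒮⟩, rfl⟩
    exact hopen 𝒮 h𝒮
  · have hfib : f ⁻¹' {y} ⊆ ⋃ s ∈ {s ∈ B | s ⊆ f ⁻¹' O}, s := by
      rw [← sUnion_eq_biUnion, ← (isBasis_countableBasis K).open_eq_sUnion' (hO.preimage hf.1)]
      exact preimage_mono (singleton_subset_iff.mpr hyO)
    obtain ⟨𝒮, h𝒮B, h𝒮fin, hcover⟩ := (hf.isCompact_preimage isCompact_singleton)
      |>.elim_finite_subcover_image (fun s hs => isOpen_of_mem_countableBasis hs.1) hfib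
    refine ⟨_, ⟨𝒮, ⟨h𝒮fin, fun s hs => (h𝒮B hs).1⟩, rfl⟩, ?_, ?_⟩
    · rintro ⟨x, hx, rfl⟩
      exact hx (sUnion_eq_biUnion ▸ hcover rfl)
    · intro y' hy'
      obtain ⟨x, rfl⟩ := hsurj y'
      by_contra hxO
      exact hy' ⟨x, fun ⟨s, hs, hxs⟩ => hxO ((h𝒮B hs).2 hxs), rfl⟩

end ProperMap

def IsImpulseInvariant {X : Type*} (D : Set X) (I : X → X) (U : Set X) : Prop :=
  ∀ a ∈ D, I a ∈ U ↔ a ∈ U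

section Impulse

variable {X : Type*} {D Ω U : Set X} {I : X → X}

local notation "π" => Quotient.mk (Relation.EqvGen.setoid (ImpulseRel D I))

theorem IsImpulseInvariant.mem_iff_of_eqvGen (hU : IsImpulseInvariant D I U) {x y : X}
    (h : Relation.EqvGen (ImpulseRel D I) x y) : x ∈ U ↔ y ∈ U := by
  induction h with
  | rel a b hab =>
    rcases hab with rfl | ⟨ha, rfl⟩ | ⟨hb, rfl⟩ | ⟨ha, hb, hab⟩
    · rfl
    · exact (hU a ha).symm
    · exact hU b hb
    · rw [← hU a ha, ← hU b hb, hab]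
  | refl => rfl
  | symm _ _ _ ih => exact ih.symm
  | trans _ _ _ _ _ ih₁ ih₂ => exact ih₁.trans ih₂

theorem IsImpulseInvariant.preimage_image_mk (hU : IsImpulseInvariant D I U) :
    π ⁻¹' (π '' U) = U := by
  ext x
  constructor
  · rintro ⟨u, hu, hux⟩
    exact (hU.mem_iff_of_eqvGen (Quotient.exact hux)).mp hu
  · exact fun hx => ⟨x, hx, rfl⟩

variable [TopologicalSpace X]

theorem isClosed_setOf_impulseRel [T2Space X] (hD : IsClosed D) (hI : ContinuousOn I D) :
    IsClosed {p : X × X | ImpulseRel D I p.1 p.2} := by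
  have hD₁ : IsClosed (Prod.fst ⁻¹' D : Set (X × X)) := hD.preimage continuous_fst
  have hD₂ : IsClosed (Prod.snd ⁻¹' D : Set (X × X)) := hD.preimage continuous_snd
  have hI₁ : ContinuousOn (fun p : X × X => I p.1) (Prod.fst ⁻¹' D) :=
    hI.comp continuousOn_fst fun _ hp => hp
  have hI₂ : ContinuousOn (fun p : X × X => I p.2) (Prod.snd ⁻¹' D) :=
    hI.comp continuousOn_snd fun _ hp => hp
  simp only [ImpulseRel, ofPred_or]
  refine isClosed_diagonal.union ((hD₁.isClosed_eq continuousOn_snd hI₁).union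
    ((hD₂.isClosed_eq continuousOn_fst hI₂).union ?_))
  have h := (hD₁.inter hD₂).isClosed_eq (hI₁.mono inter_subset_left) (hI₂.mono inter_subset_right)
  simpa only [mem_inter_iff, mem_preimage, and_assoc] using h

theorem exists_isOpen_isImpulseInvariant_inter_eq (hD : IsClosed D) (hI : ContinuousOn I D)
    (hΩ : IsClosed Ω) (hID : I '' (Ω ∩ D) ⊆ Ω \ D) {N : Set X} (hN : IsOpen N)
    (hNΩ : ∀ a ∈ Ω ∩ D, I a ∈ N ↔ a ∈ N) :
    ∃ U, IsOpen U ∧ IsImpulseInvariant D I U ∧ U ∩ Ω = N ∩ Ω := by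
  set 𝒪 : Set (Set X) := {O | IsOpen O ∧ O ∩ Ω ⊆ N ∧ MapsTo I (O ∩ D) O}
  set U := ⋃₀ 𝒪
  have hUo : IsOpen U := isOpen_sUnion fun O hO => hO.1
  have hUN : U ∩ Ω ⊆ N := fun x ⟨⟨O, hO, hxO⟩, hxΩ⟩ => hO.2.1 ⟨hxO, hxΩ⟩
  have hUI : MapsTo I (U ∩ D) U := fun x ⟨⟨O, hO, hxO⟩, hxD⟩ => ⟨O, hO, hO.2.2 ⟨hxO, hxD⟩⟩
  have hNU : N \ D ⊆ U :=
    subset_sUnion_of_mem ⟨hN.sdiff hD, fun x hx => hx.1.1, fun x hx => (hx.1.2 hx.2).elim⟩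
  -- maximality of `U`: enlarging it by the open set where `I` lands in `U` stays inside `𝒪`
  have hUI' : ∀ a ∈ D, I a ∈ U → a ∈ U := by
    obtain ⟨A, hAo, hA⟩ := continuousOn_iff'.mp hI U hUo
    have hA' : ∀ a ∈ D, a ∈ A ↔ I a ∈ U := fun a ha => by
      simpa [ha] using (congrArg (a ∈ ·) hA).symm
    have hO : U ∪ A ∩ (N ∪ Ωᶜ) ∈ 𝒪 := by
      refine ⟨hUo.union (hAo.inter (hN.union hΩ.isOpen_compl)), ?_, ?_⟩
      · rintro x ⟨hx | ⟨-, hx⟩, hxΩ⟩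
        · exact hUN ⟨hx, hxΩ⟩
        · exact hx.resolve_right (not_not_intro hxΩ)
      · rintro x ⟨hx | ⟨hxA, -⟩, hxD⟩
        · exact Or.inl (hUI ⟨hx, hxD⟩)
        · exact Or.inl ((hA' x hxD).mp hxA)
    intro a haD haU
    refine subset_sUnion_of_mem hO (Or.inr ⟨(hA' a haD).mpr haU, ?_⟩)
    by_cases haΩ : a ∈ Ω
    · exact Or.inl ((hNΩ a ⟨haΩ, haD⟩).mp (hUN ⟨haU, (hID ⟨a, ⟨haΩ, haD⟩, rfl⟩).1⟩))
    · exact Or.inr haΩ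
  refine ⟨U, hUo, fun a ha => ⟨hUI' a ha, fun h => hUI ⟨h, ha⟩⟩,
    subset_antisymm (subset_inter hUN inter_subset_right) ?_⟩
  rintro x ⟨hxN, hxΩ⟩
  refine ⟨?_, hxΩ⟩
  by_cases hxD : x ∈ D
  · exact hUI' x hxD
      (hNU ⟨(hNΩ x ⟨hxΩ, hxD⟩).mpr hxN, (hID ⟨x, ⟨hxΩ, hxD⟩, rfl⟩).2⟩)
  · exact hNU ⟨hxN, hxD⟩

theorem impulseRel_of_eqvGen [T2Space X] (hD : IsClosed D) (hI : ContinuousOn I D)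
    (hΩ : IsClosed Ω) (hID : I '' (Ω ∩ D) ⊆ Ω \ D) {x y : X} (hx : x ∈ Ω) (hy : y ∈ Ω)
    (h : Relation.EqvGen (ImpulseRel D I) x y) : ImpulseRel D I x y := by
  by_contra hxy
  set N := {z | ImpulseRel D I z y}ᶜ
  have hN : IsOpen N := ((isClosed_setOf_impulseRel hD hI).preimage
    (continuous_id.prodMk continuous_const : Continuous fun z => (z, y))).isOpen_compl
  have hNΩ : ∀ a ∈ Ω ∩ D, I a ∈ N ↔ a ∈ N := by
    rintro a ⟨haΩ, haD⟩
    have hIa : I a ∉ D := (hID ⟨a, ⟨haΩ, haD⟩, rfl⟩).2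
    have hIy : y ∈ D → I y ∉ D := fun hyD => (hID ⟨y, ⟨hy, hyD⟩, rfl⟩).2
    simp only [N, mem_compl_iff, mem_ofPred_eq, not_iff_not, ImpulseRel]
    grind
  obtain ⟨U, -, hU, hUΩ⟩ := exists_isOpen_isImpulseInvariant_inter_eq hD hI hΩ hID hN hNΩ
  have hxU : x ∈ U := (hUΩ.symm ▸ ⟨hxy, hx⟩ : x ∈ U ∩ Ω).1
  have hyU : y ∉ U := fun hyU => (hUΩ ▸ ⟨hyU, hy⟩ : y ∈ N ∩ Ω).1 (Or.inl rfl)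
  exact hyU ((hU.mem_iff_of_eqvGen h).mp hxU)

theorem isQuotientMap_imageFactorization_mk (hD : IsClosed D) (hI : ContinuousOn I D)
    (hΩ : IsClosed Ω) (hID : I '' (Ω ∩ D) ⊆ Ω \ D) :
    IsQuotientMap (Ω.imageFactorization π) := by
  set g := Ω.imageFactorization π
  have hg : Continuous g := (continuous_quot_mk.comp continuous_subtype_val).subtype_mk _
  refine ⟨isCoinducing_iff.mpr fun S =>
    ⟨fun hS => ?_, fun hS => hS.preimage hg⟩, imageFactorization_surjective⟩
  obtain ⟨N, hN, hNS⟩ := isOpen_induced_iff.mp hS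
  have hmem : ∀ x (hx : x ∈ Ω), x ∈ N ↔ g ⟨x, hx⟩ ∈ S := fun x hx => Set.ext_iff.mp hNS ⟨x, hx⟩
  have hNΩ : ∀ a ∈ Ω ∩ D, I a ∈ N ↔ a ∈ N := by
    rintro a ⟨haΩ, haD⟩
    have hIa : I a ∈ Ω := (hID ⟨a, ⟨haΩ, haD⟩, rfl⟩).1
    have hga : g ⟨I a, hIa⟩ = g ⟨a, haΩ⟩ :=
      Subtype.ext (Quotient.sound (.rel _ _ (Or.inr (Or.inr (Or.inl ⟨haD, rfl⟩)))))
    rw [hmem _ hIa, hmem _ haΩ, hga]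
  obtain ⟨U, hUo, hU, hUΩ⟩ := exists_isOpen_isImpulseInvariant_inter_eq hD hI hΩ hID hN hNΩ
  have hSU : S = Subtype.val ⁻¹' (π '' U) := by
    ext ⟨_, x, hx, rfl⟩
    rw [mem_preimage, ← mem_preimage (f := π), hU.preimage_image_mk]
    exact (hmem x hx).symm.trans (by simpa [hx] using (Set.ext_iff.mp hUΩ x).symm)
  rw [hSU]
  refine IsOpen.preimage continuous_subtype_val (isQuotientMap_quotient_mk'.isOpen_preimage.mp ?_)
  exact hU.preimage_image_mk.symm ▸ hUo

theorem isClosed_ker_imageFactorization_mk [T2Space X] (hD : IsClosed D) (hI : ContinuousOn I D)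
    (hΩ : IsClosed Ω) (hID : I '' (Ω ∩ D) ⊆ Ω \ D) :
    IsClosed {p : Ω × Ω | Ω.imageFactorization π p.1 = Ω.imageFactorization π p.2} := by
  have hker : {p : Ω × Ω | Ω.imageFactorization π p.1 = Ω.imageFactorization π p.2} =
      (fun p : Ω × Ω => ((p.1 : X), (p.2 : X))) ⁻¹' {p | ImpulseRel D I p.1 p.2} := by
    ext ⟨⟨x, hx⟩, ⟨y, hy⟩⟩
    simp only [mem_ofPred_eq, mem_preimage, imageFactorization, Subtype.mk.injEq, Quotient.eq]
    exact ⟨impulseRel_of_eqvGen hD hI hΩ hID hx hy, .rel x y⟩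
  rw [hker]
  exact (isClosed_setOf_impulseRel hD hI).preimage (by fun_prop)

end Impulse

theorem stmt12_general {X : Type*} [MetricSpace X] [CompactSpace X]
    (D : Set X) (I : X → X) (φ : ℝ≥0 → X → X)
    (hD : IsCompact D) (hI : ContinuousOn I D)
    (hID : I '' (NonWanderingSet φ ∩ D) ⊆ NonWanderingSet φ \ D) :
    IsCompact (Quotient.mk (Relation.EqvGen.setoid (ImpulseRel D I)) '' NonWanderingSet φ) ∧
    T0Space ↥(Quotient.mk (Relation.EqvGen.setoid (ImpulseRel D I)) '' NonWanderingSet φ) ∧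
    TopologicalSpace.MetrizableSpace
      ↥(Quotient.mk (Relation.EqvGen.setoid (ImpulseRel D I)) '' NonWanderingSet φ) := by
  have hΩ := isClosed_nonWanderingSet φ
  have hq := isQuotientMap_imageFactorization_mk hD.isClosed hI hΩ hID
  have hker := isClosed_ker_imageFactorization_mk hD.isClosed hI hΩ hID
  have : CompactSpace (NonWanderingSet φ) := isCompact_iff_compactSpace.mp hΩ.isCompact
  have := hq.surjective.compactSpace hq.continuous
  have hproper := hq.isProperMap_of_isClosed_ker hker
  have := hproper.t2Space_of_isClosed_ker hq.surjective hker
  have := hproper.secondCountableTopology hq.surjective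
  exact ⟨hΩ.isCompact.image continuous_quot_mk, inferInstance, inferInstance⟩

/-- Under `I(Ω_φ ∩ D) ⊆ Ω_φ \ D`, the image `π(Ω_φ)` of the non-wandering set in the
quotient of `X` by the equivalence relation generated by the impulsive map, endowed with
the quotient topology, is compact and metrizable (its quotient pseudometric is a metric). -/
theorem stmt12 {X : Type*} [MetricSpace X] [CompactSpace X]
    (φb : ℝ≥0 → X → X) (D : Set X) (I : X → X) (φ : ℝ≥0 → X → X)
    (hφb : IsSemiflow φb) (hc : Continuous fun p : ℝ≥0 × X => φb p.1 p.2)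
    (hD : IsCompact D) (hI : ContinuousOn I D)
    (hpos : ∀ x, 0 < ImpulsiveTau φb D x)
    (hφ : IsImpulsiveSemiflow φb D I φ)
    (hID : I '' (NonWanderingSet φ ∩ D) ⊆ NonWanderingSet φ \ D) :
    IsCompact (Quotient.mk (Relation.EqvGen.setoid (ImpulseRel D I)) '' NonWanderingSet φ) ∧
    T0Space ↥(Quotient.mk (Relation.EqvGen.setoid (ImpulseRel D I)) '' NonWanderingSet φ) ∧
    TopologicalSpace.MetrizableSpace
      ↥(Quotient.mk (Relation.EqvGen.setoid (ImpulseRel D I)) '' NonWanderingSet φ) :=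
  stmt12_general D I φ hD hI hID
end

section
/- Let φ be the semiflow of an impulsive dynamical system (X, φ̄, D, I) with τ_D continuous and I(Ω_φ ∩ D) ⊂ Ω_φ \ D. Then any φ-invariant Borel probability measure μ satisfies μ(D) = 0. -/
/-!
Since `τ₁ > 0` everywhere, `D` is the countable union of the slices `D_ε = {x ∈ D | ε ≤ τ₁ x}`.
Before time `ε` the impulsive trajectory of a point of `D_ε` follows the base flow, so it stays
outside `D`. Hence for `δ = ε / N` the sets `φ_{kδ}⁻¹(D_ε)`, `k < N`, are pairwise disjoint, and by
invariance each has measure `μ D_ε`; so `N * μ D_ε ≤ 1` for every `N`, i.e. `μ D_ε = 0`.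
The maps `φ_t` need not be measurable: the preimages are only null-measurable, which follows from
invariance applied to `D_ε` and to its complement.
-/

open Set Filter Topology MeasureTheory Function
open scoped NNReal ENNReal Classical

theorem nullMeasurableSet_of_measure_add_measure_compl {X : Type*} [MeasurableSpace X]
    {μ : Measure X} [IsFiniteMeasure μ] {s : Set X} (h : μ s + μ sᶜ = μ univ) :
    NullMeasurableSet s μ := by
  set H := toMeasurable μ s
  set H' := toMeasurable μ sᶜ
  have hH'c : H'ᶜ ⊆ s := compl_subset_comm.mp (subset_toMeasurable μ sᶜ)
  have hHH' : μ (H ∩ H') = 0 := by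
    have hunion : H ∪ H' = univ :=
      eq_univ_of_univ_subset fun x _ ↦ (em (x ∈ s)).imp
        (subset_toMeasurable μ s ·) (subset_toMeasurable μ sᶜ ·)
    have := measure_union_add_inter (μ := μ) H (measurableSet_toMeasurable μ sᶜ)
    rw [hunion, measure_toMeasurable, measure_toMeasurable, h] at this
    exact (ENNReal.add_right_inj (measure_ne_top μ univ)).mp (this.trans (add_zero _).symm)
  refine (measurableSet_toMeasurable μ sᶜ).compl.nullMeasurableSet.congr ?_
  refine ae_eq_set.mpr ⟨by rw [sdiff_eq_empty.mpr hH'c, measure_empty], measure_mono_null ?_ hHH'⟩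
  rintro x ⟨hxs, hxH'⟩
  exact ⟨subset_toMeasurable μ s hxs, not_not.mp hxH'⟩

theorem IsOpen.isSigmaCompact {X : Type*} [TopologicalSpace X] [LocallyCompactSpace X]
    [SecondCountableTopology X] {s : Set X} (hs : IsOpen s) : IsSigmaCompact s :=
  have := hs.locallyCompactSpace
  isSigmaCompact_iff_sigmaCompactSpace.mpr inferInstance

theorem measurableSet_setOf_exists_mem_of_isSigmaCompact {T X Y : Type*} [TopologicalSpace T]
    [TopologicalSpace X] [CompactSpace X] [T2Space X] [MeasurableSpace X]
    [OpensMeasurableSpace X] [TopologicalSpace Y] {f : T × X → Y} (hf : Continuous f)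
    {D : Set Y} (hD : IsClosed D) {s : Set T} (hs : IsSigmaCompact s) :
    MeasurableSet {x | ∃ t ∈ s, f (t, x) ∈ D} := by
  obtain ⟨K, hK, rfl⟩ := hs
  have : {x | ∃ t ∈ ⋃ n, K n, f (t, x) ∈ D} = ⋃ n, Prod.snd '' (K n ×ˢ univ ∩ f ⁻¹' D) := by
    ext x
    simp only [mem_iUnion, mem_ofPred_eq, mem_image, mem_inter_iff, mem_prod, mem_univ, and_true,
      mem_preimage, Prod.exists, exists_eq_right]
    grind
  rw [this]
  exact .iUnion fun n ↦ ((((hK n).prod isCompact_univ).inter_right (hD.preimage hf)).image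
    continuous_snd).isClosed.measurableSet

section Recurrence

variable {X : Type*} {φ : ℝ≥0 → X → X} {S : Set X} {ε : ℝ≥0}

theorem disjoint_preimage_of_lt_of_lt_add (hφ : ∀ s t x, φ (t + s) x = φ t (φ s x))
    (hS : ∀ s ∈ Ioo 0 ε, Disjoint (φ s ⁻¹' S) S) {t u : ℝ≥0} (htu : t < u) (hut : u < t + ε) :
    Disjoint (φ t ⁻¹' S) (φ u ⁻¹' S) := by
  refine disjoint_left.mpr fun x hxt hxu ↦ disjoint_left.mp
    (hS (u - t) ⟨tsub_pos_of_lt htu, (tsub_lt_iff_left htu.le).mpr hut⟩)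
    (show φ t x ∈ φ (u - t) ⁻¹' S by rwa [mem_preimage, ← hφ, tsub_add_cancel_of_le htu.le]) hxt

variable [MeasurableSpace X] {μ : Measure X}

theorem nullMeasurableSet_preimage_of_measure_preimage [IsFiniteMeasure μ]
    (hinv : ∀ t A, MeasurableSet A → μ (φ t ⁻¹' A) = μ A) (t : ℝ≥0) (hS : MeasurableSet S) :
    NullMeasurableSet (φ t ⁻¹' S) μ :=
  nullMeasurableSet_of_measure_add_measure_compl <| by
    rw [← preimage_compl, hinv t S hS, hinv t Sᶜ hS.compl, measure_add_measure_compl hS]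

theorem nat_mul_measure_le_of_disjoint_preimage [IsFiniteMeasure μ]
    (hφ : ∀ s t x, φ (t + s) x = φ t (φ s x))
    (hinv : ∀ t A, MeasurableSet A → μ (φ t ⁻¹' A) = μ A) (hSm : MeasurableSet S)
    (hS : ∀ s ∈ Ioo 0 ε, Disjoint (φ s ⁻¹' S) S) (hε : 0 < ε) (N : ℕ) :
    N * μ S ≤ μ univ := by
  set δ := ε / N
  set E : ℕ → Set X := fun k ↦ φ (k * δ) ⁻¹' S
  have hlt : ∀ j k, j < k → k < N → Disjoint (E j) (E k) := by
    intro j k hjk hkN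
    have hN : (N : ℝ≥0) ≠ 0 := by exact_mod_cast (by omega : N ≠ 0)
    have hδ : 0 < δ := div_pos hε (pos_iff_ne_zero.mpr hN)
    refine disjoint_preimage_of_lt_of_lt_add hφ hS (by gcongr) ?_
    calc (k : ℝ≥0) * δ < (j + N) * δ := by gcongr; exact_mod_cast (by omega : k < j + N)
      _ = j * δ + ε := by rw [add_mul, mul_div_cancel₀ _ hN]
  have hdisj : (Finset.range N : Set ℕ).Pairwise (Disjoint on E) := by
    intro j hj k hk hjk
    rcases hjk.lt_or_gt with h | h
    · exact hlt j k h (Finset.mem_range.mp hk)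
    · exact (hlt k j h (Finset.mem_range.mp hj)).symm
  calc (N : ℝ≥0∞) * μ S = ∑ k ∈ Finset.range N, μ (E k) := by
        simp [E, hinv _ S hSm]
    _ = μ (⋃ k ∈ Finset.range N, E k) :=
        (measure_biUnion_finset₀ (hdisj.mono' fun _ _ h ↦ h.aedisjoint) fun k _ ↦
          nullMeasurableSet_preimage_of_measure_preimage hinv _ hSm).symm
    _ ≤ μ univ := measure_mono (subset_univ _)

theorem measure_eq_zero_of_disjoint_preimage [IsFiniteMeasure μ]
    (hφ : ∀ s t x, φ (t + s) x = φ t (φ s x))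
    (hinv : ∀ t A, MeasurableSet A → μ (φ t ⁻¹' A) = μ A) (hSm : MeasurableSet S)
    (hS : ∀ s ∈ Ioo 0 ε, Disjoint (φ s ⁻¹' S) S) (hε : 0 < ε) : μ S = 0 := by
  by_contra h
  obtain ⟨N, hN⟩ := ENNReal.exists_nat_mul_gt h (measure_ne_top μ univ)
  exact (nat_mul_measure_le_of_disjoint_preimage hφ hinv hSm hS hε N).not_gt hN

end Recurrence

section ImpulsiveTau

variable {X : Type*} {φb : ℝ≥0 → X → X} {D : Set X}

theorem le_impulsiveTau_iff {x : X} {ε : ℝ≥0} :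
    (ε : ℝ≥0∞) ≤ ImpulsiveTau φb D x ↔ ∀ t ∈ Ioo 0 ε, φb t x ∉ D := by
  simp only [ImpulsiveTau, le_sInf_iff, forall_mem_image, mem_ofPred_eq, ENNReal.coe_le_coe]
  exact ⟨fun h t ht htD ↦ (h ⟨ht.1, htD⟩).not_gt ht.2,
    fun h t ⟨ht, htD⟩ ↦ not_lt.mp fun hlt ↦ h t ⟨ht, hlt⟩ htD⟩

theorem measurableSet_setOf_le_impulsiveTau [TopologicalSpace X] [CompactSpace X] [T2Space X]
    [MeasurableSpace X] [OpensMeasurableSpace X] (hc : Continuous fun p : ℝ≥0 × X ↦ φb p.1 p.2)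
    (hD : IsClosed D) (ε : ℝ≥0) : MeasurableSet {x | (ε : ℝ≥0∞) ≤ ImpulsiveTau φb D x} := by
  have : {x | (ε : ℝ≥0∞) ≤ ImpulsiveTau φb D x} = {x | ∃ t ∈ Ioo 0 ε, φb t x ∈ D}ᶜ := by
    ext x
    simp [le_impulsiveTau_iff]
  rw [this]
  exact (measurableSet_setOf_exists_mem_of_isSigmaCompact hc hD isOpen_Ioo.isSigmaCompact).compl

theorem IsImpulsiveSemiflow.disjoint_preimage_setOf_le_impulsiveTau {I : X → X}
    {φ : ℝ≥0 → X → X} (hφ : IsImpulsiveSemiflow φb D I φ) {ε s : ℝ≥0} (hs : s ∈ Ioo 0 ε) :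
    Disjoint (φ s ⁻¹' (D ∩ {x | ε ≤ ImpulsiveTau φb D x})) (D ∩ {x | ε ≤ ImpulsiveTau φb D x}) := by
  refine disjoint_left.mpr fun x hsx hx ↦ ?_
  have hτ : (s : ℝ≥0∞) < ImpulsiveTau φb D x := (ENNReal.coe_lt_coe.mpr hs.2).trans_le hx.2
  exact le_impulsiveTau_iff.mp hx.2 s hs (hφ.2.1 x s hτ ▸ hsx.1)

end ImpulsiveTau

theorem ENNReal.exists_inv_nat_succ_le {a : ℝ≥0∞} (ha : 0 < a) :
    ∃ n : ℕ, ((((n : ℝ≥0) + 1)⁻¹ : ℝ≥0) : ℝ≥0∞) ≤ a := by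
  obtain ⟨n, hn⟩ := ENNReal.exists_inv_nat_lt ha.ne'
  refine ⟨n, le_trans ?_ hn.le⟩
  rw [ENNReal.coe_inv (by positivity)]
  push_cast
  exact ENNReal.inv_le_inv.mpr le_self_add

theorem stmt16_general {X : Type*} [MetricSpace X] [CompactSpace X]
    [MeasurableSpace X] [BorelSpace X]
    (φb : ℝ≥0 → X → X) (D : Set X) (I : X → X) (φ : ℝ≥0 → X → X)
    (hc : Continuous fun p : ℝ≥0 × X => φb p.1 p.2)
    (hD : IsCompact D)
    (hpos : ∀ x, 0 < ImpulsiveTau φb D x)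
    (hφ : IsImpulsiveSemiflow φb D I φ)
    (μ : Measure X) [IsProbabilityMeasure μ]
    (hinv : ∀ t : ℝ≥0, ∀ A : Set X, MeasurableSet A → μ (φ t ⁻¹' A) = μ A) :
    μ D = 0 := by
  set S : ℕ → Set X := fun n ↦ D ∩ {x | (((n : ℝ≥0) + 1)⁻¹ : ℝ≥0) ≤ ImpulsiveTau φb D x}
  have hcover : D ⊆ ⋃ n, S n := fun x hx ↦
    mem_iUnion.mpr ((ENNReal.exists_inv_nat_succ_le (hpos x)).imp fun _ hn ↦ ⟨hx, hn⟩)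
  refine measure_mono_null hcover (measure_iUnion_null fun n ↦ ?_)
  exact measure_eq_zero_of_disjoint_preimage hφ.1.2 hinv
    (hD.isClosed.measurableSet.inter (measurableSet_setOf_le_impulsiveTau hc hD.isClosed _))
    (fun s hs ↦ hφ.disjoint_preimage_setOf_le_impulsiveTau hs) (by positivity)

/-- If `τ_D` (equal to `τ₁` on `Ω_φ \ D` and to `0` on `Ω_φ ∩ D`) is continuous and
`I(Ω_φ ∩ D) ⊆ Ω_φ \ D`, then every `φ`-invariant Borel probability measure gives
measure zero to `D`. -/
theorem stmt16 {X : Type*} [MetricSpace X] [CompactSpace X]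
    [MeasurableSpace X] [BorelSpace X]
    (φb : ℝ≥0 → X → X) (D : Set X) (I : X → X) (φ : ℝ≥0 → X → X)
    (hφb : IsSemiflow φb) (hc : Continuous fun p : ℝ≥0 × X => φb p.1 p.2)
    (hD : IsCompact D) (hI : ContinuousOn I D)
    (hpos : ∀ x, 0 < ImpulsiveTau φb D x)
    (hφ : IsImpulsiveSemiflow φb D I φ)
    (htauD : ContinuousOn (fun x => if x ∈ D then (0 : ℝ≥0∞) else ImpulsiveTau φb D x)
      (NonWanderingSet φ))
    (hID : I '' (NonWanderingSet φ ∩ D) ⊆ NonWanderingSet φ \ D)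
    (μ : Measure X) [IsProbabilityMeasure μ]
    (hinv : ∀ t : ℝ≥0, ∀ A : Set X, MeasurableSet A → μ (φ t ⁻¹' A) = μ A) :
    μ D = 0 :=
  stmt16_general φb D I φ hc hD hpos hφ μ hinv
end
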